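/- Let (V, r, par) be a finite rooted tree and ℓ, w : V → ℝ with ℓ u ≥ 0 and w u ≥ 0 for all u. For z ∈ V let A_z be the union of all covered subtrees rooted at z. Then: (1) A_z is a covered subtree rooted at z, and every covered subtree rooted at z is contained in A_z; (2) for every subtree Z rooted at z, ∑_{u∈Z} w u − ℓ(Z ∖ {z}) ≤ ∑_{u∈A_z} w u − ℓ(A_z ∖ {z}); (3) consequently, if some subtree Z rooted at z satisfies ∑_{u∈Z} w u ≥ ℓ(Z), then ∑_{u∈A_z} w u ≥ ℓ(A_z). -/

import Mathlib

open scoped Classical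

/-- `u` is a descendant of `v` (equivalently, `v` is an ancestor of `u`). -/
def IsDesc {V : Type*} (par : V → V) (u v : V) : Prop := ∃ n : ℕ, par^[n] u = v

/-- `Z` is a subtree rooted at `v`. -/
def IsSubtree {V : Type*} [DecidableEq V] (par : V → V) (v : V) (Z : Finset V) : Prop :=
  v ∈ Z ∧ (∀ u ∈ Z, IsDesc par u v) ∧ ∀ u ∈ Z, u ≠ v → par u ∈ Z

/-- `Z` is a covered subtree rooted at `z` (with respect to the waiting costs `w`). -/
def Covered {V : Type*} [Fintype V] [DecidableEq V] (par : V → V) (ℓ w : V → ℝ)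
    (z : V) (Z : Finset V) : Prop :=
  IsSubtree par z Z ∧ ∀ x ∈ Z, x ≠ z →
    ∑ u ∈ Z.filter (fun u => IsDesc par u x), ℓ u ≤
      ∑ u ∈ Z.filter (fun u => IsDesc par u x), w u

/-! Write `∑ (w - ℓ)` for the surplus. If `B` is covered and `C` is any subtree with the same
root, then `B \ C` is a disjoint union of branches of `B` hanging directly below `C`, each of
nonnegative surplus, so the surplus of `B \ C` is nonnegative. Applied below each node, this
makes covered subtrees closed under union, so `A_z` is the largest of them. A subtree of maximal
surplus is covered, since cutting off a branch cannot increase its surplus; hence it lies inside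
`A_z`, whose surplus is then at least as large. -/

open Finset Function

namespace IsDesc

variable {V : Type*} {par : V → V}

protected lemma refl (par : V → V) (u : V) : IsDesc par u u := ⟨0, rfl⟩

protected lemma trans {a b c : V} (hab : IsDesc par a b) (hbc : IsDesc par b c) :
    IsDesc par a c := by
  obtain ⟨m, rfl⟩ := hab
  obtain ⟨n, rfl⟩ := hbc
  exact ⟨n + m, iterate_add_apply par n m a⟩

lemma self_par (par : V → V) (u : V) : IsDesc par u (par u) := ⟨1, rfl⟩

lemma of_par {a b : V} (h : IsDesc par (par a) b) : IsDesc par a b :=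
  (self_par par a).trans h

lemma par_of_ne {a b : V} (h : IsDesc par a b) (hne : a ≠ b) : IsDesc par (par a) b := by
  obtain ⟨_ | n, hn⟩ := h
  · exact absurd hn hne
  · exact ⟨n, hn⟩

end IsDesc

section RootedTree

variable {V : Type*} {par : V → V} {r : V}

lemma eq_root_of_isPeriodicPt (hroot : par r = r) (hreach : ∀ v, ∃ n : ℕ, par^[n] v = r)
    {a : V} {p : ℕ} (hp : 0 < p) (ha : IsPeriodicPt par p a) : a = r := by
  obtain ⟨N, hN⟩ := hreach a
  calc a = par^[p * N] a := (ha.mul_const N).eq.symm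
    _ = par^[p * N - N] (par^[N] a) := by
      rw [← iterate_add_apply, Nat.sub_add_cancel (Nat.le_mul_of_pos_left N hp)]
    _ = r := by rw [hN, iterate_fixed hroot]

/-- The only cycle of a rooted tree is the loop at the root. -/
lemma antisymm_isDesc (hroot : par r = r) (hreach : ∀ v, ∃ n : ℕ, par^[n] v = r) :
    Std.Antisymm (IsDesc par) := by
  refine ⟨?_⟩
  rintro a b ⟨m, rfl⟩ ⟨n, hn⟩
  rcases Nat.eq_zero_or_pos m with rfl | hm
  · rfl
  have ha : a = r := eq_root_of_isPeriodicPt hroot hreach (Nat.add_pos_right n hm)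
    (by rw [IsPeriodicPt, IsFixedPt, iterate_add_apply, hn])
  rw [ha, iterate_fixed hroot]

end RootedTree

namespace IsSubtree

variable {V : Type*} [DecidableEq V] {par : V → V} {z : V} {Z : Finset V}

lemma singleton (par : V → V) (z : V) : IsSubtree par z {z} :=
  ⟨mem_singleton_self z, by simp [IsDesc.refl], by simp⟩

lemma union {Z₁ Z₂ : Finset V} (h₁ : IsSubtree par z Z₁) (h₂ : IsSubtree par z Z₂) :
    IsSubtree par z (Z₁ ∪ Z₂) := by
  refine ⟨mem_union_left _ h₁.1, ?_, ?_⟩ <;> intro u hu <;> rcases mem_union.mp hu with h | h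
  · exact h₁.2.1 u h
  · exact h₂.2.1 u h
  · exact fun hne => mem_union_left _ (h₁.2.2 u h hne)
  · exact fun hne => mem_union_right _ (h₂.2.2 u h hne)

lemma union_of_par_mem {C S : Finset V} {t : V} (hC : IsSubtree par z C)
    (hS : IsSubtree par t S) (ht : par t ∈ C) : IsSubtree par z (C ∪ S) := by
  refine ⟨mem_union_left _ hC.1, ?_, ?_⟩ <;> intro u hu <;> rcases mem_union.mp hu with h | h
  · exact hC.2.1 u h
  · exact ((hS.2.1 u h).trans (IsDesc.self_par par t)).trans (hC.2.1 _ ht)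
  · exact fun hne => mem_union_left _ (hC.2.2 u h hne)
  · intro _
    by_cases hut : u = t
    · exact mem_union_left _ (hut ▸ ht)
    · exact mem_union_right _ (hS.2.2 u h hut)

lemma exists_mem_sdiff_par_mem {B C : Finset V} (hB : IsSubtree par z B)
    (hC : IsSubtree par z C) (hne : (B \ C).Nonempty) : ∃ t ∈ B \ C, par t ∈ C := by
  obtain ⟨u, hu⟩ := hne
  obtain ⟨n, hn⟩ := hB.2.1 u (mem_sdiff.mp hu).1
  induction n generalizing u with
  | zero =>
    obtain rfl : u = z := hn
    exact absurd hC.1 (mem_sdiff.mp hu).2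
  | succ n ih =>
    obtain ⟨huB, huC⟩ := mem_sdiff.mp hu
    have huz : u ≠ z := fun h => huC (h ▸ hC.1)
    by_cases hpu : par u ∈ C
    · exact ⟨u, hu, hpu⟩
    · exact ih (par u) (mem_sdiff.mpr ⟨hB.2.2 u huB huz, hpu⟩) hn


variable [Std.Antisymm (IsDesc par)]

lemma mem_of_isDesc (hZ : IsSubtree par z Z) {u x : V} (hu : u ∈ Z)
    (hux : IsDesc par u x) (hxz : IsDesc par x z) : x ∈ Z := by
  obtain ⟨n, hn⟩ := hux
  induction n generalizing u with
  | zero => exact hn ▸ hu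
  | succ n ih =>
    by_cases huz : u = z
    · subst huz
      exact antisymm hxz ⟨n + 1, hn⟩ ▸ hu
    · exact ih (hZ.2.2 u hu huz) hn

lemma filter_isDesc (hZ : IsSubtree par z Z) {x : V} (hx : x ∈ Z) :
    IsSubtree par x (Z.filter (IsDesc par · x)) := by
  refine ⟨mem_filter.mpr ⟨hx, IsDesc.refl par x⟩, fun u hu => (mem_filter.mp hu).2, ?_⟩
  intro u hu hne
  obtain ⟨huZ, hux⟩ := mem_filter.mp hu
  have huz : u ≠ z := by
    rintro rfl
    exact hne (antisymm hux (hZ.2.1 x hx))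
  exact mem_filter.mpr ⟨hZ.2.2 u huZ huz, hux.par_of_ne hne⟩

lemma filter_not_isDesc (hZ : IsSubtree par z Z) {x : V} (hx : x ∈ Z) (hxz : x ≠ z) :
    IsSubtree par z (Z.filter (¬ IsDesc par · x)) := by
  refine ⟨mem_filter.mpr ⟨hZ.1, fun h => hxz (antisymm (hZ.2.1 x hx) h)⟩,
    fun u hu => hZ.2.1 u (mem_filter.mp hu).1, ?_⟩
  intro u hu hne
  obtain ⟨huZ, hnd⟩ := mem_filter.mp hu
  exact mem_filter.mpr ⟨hZ.2.2 u huZ hne, fun h => hnd h.of_par⟩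

end IsSubtree

lemma sum_sub_sum_sdiff_singleton {V M : Type*} [DecidableEq V] [AddCommGroup M]
    {s : Finset V} {z : V} (hz : z ∈ s) (f g : V → M) :
    ∑ u ∈ s, f u - ∑ u ∈ s \ {z}, g u = ∑ u ∈ s, (f u - g u) + g z := by
  rw [sum_sub_distrib, sdiff_singleton_eq_erase, sum_erase_eq_sub hz]
  abel

section Covered

variable {V : Type*} [Fintype V] [DecidableEq V] {par : V → V} {ℓ w : V → ℝ} {z : V}
  {Z : Finset V}

lemma covered_iff_sum_sub_nonneg : Covered par ℓ w z Z ↔ IsSubtree par z Z ∧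
    ∀ x ∈ Z, x ≠ z → 0 ≤ ∑ u ∈ Z.filter (IsDesc par · x), (w u - ℓ u) := by
  simp only [Covered, sum_sub_distrib, sub_nonneg]

lemma Covered.singleton (par : V → V) (ℓ w : V → ℝ) (z : V) : Covered par ℓ w z {z} :=
  ⟨IsSubtree.singleton par z, by simp⟩

variable [Std.Antisymm (IsDesc par)]

lemma Covered.filter_isDesc (hZ : Covered par ℓ w z Z) {x : V} (hx : x ∈ Z) :
    Covered par ℓ w x (Z.filter (IsDesc par · x)) := by
  refine ⟨hZ.1.filter_isDesc hx, fun t ht htx => ?_⟩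
  obtain ⟨htZ, htx'⟩ := mem_filter.mp ht
  have htz : t ≠ z := by
    rintro rfl
    exact htx (antisymm htx' (hZ.1.2.1 x hx))
  have hfilter : (Z.filter (IsDesc par · x)).filter (IsDesc par · t) =
      Z.filter (IsDesc par · t) := by
    rw [filter_filter]
    exact filter_congr fun u _ => ⟨And.right, fun h => ⟨h.trans htx', h⟩⟩
  rw [hfilter]
  exact hZ.2 t htZ htz

lemma Covered.sum_sdiff_nonneg {B C : Finset V} (hB : Covered par ℓ w z B)
    (hC : IsSubtree par z C) : 0 ≤ ∑ u ∈ B \ C, (w u - ℓ u) := by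
  induction hn : (B \ C).card using Nat.strong_induction_on generalizing C with
  | _ n ih =>
  rcases (B \ C).eq_empty_or_nonempty with hemp | hne
  · simp [hemp]
  obtain ⟨t, ht, htC⟩ := hB.1.exists_mem_sdiff_par_mem hC hne
  obtain ⟨htB, htC'⟩ := mem_sdiff.mp ht
  set S := B.filter (IsDesc par · t)
  have hSsub : S ⊆ B \ C := fun u hu => mem_sdiff.mpr ⟨(mem_filter.mp hu).1,
    fun huC => htC' (hC.mem_of_isDesc huC (mem_filter.mp hu).2 (hB.1.2.1 t htB))⟩
  have htS : t ∈ S := mem_filter.mpr ⟨htB, .refl par t⟩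
  have hpeel : (B \ C) \ S = B \ (C ∪ S) := sdiff_sdiff_left
  have hrest : 0 ≤ ∑ u ∈ B \ (C ∪ S), (w u - ℓ u) := by
    refine ih _ ?_ (hC.union_of_par_mem (hB.1.filter_isDesc htB) htC) rfl
    rw [← hn, ← hpeel]
    exact card_lt_card (sdiff_ssubset hSsub ⟨t, htS⟩)
  have hbranch : 0 ≤ ∑ u ∈ S, (w u - ℓ u) :=
    (covered_iff_sum_sub_nonneg.mp hB).2 t htB fun h => htC' (h ▸ hC.1)
  rw [← sum_sdiff hSsub, hpeel]
  exact add_nonneg hrest hbranch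

lemma Covered.union {Z₁ Z₂ : Finset V} (h₁ : Covered par ℓ w z Z₁)
    (h₂ : Covered par ℓ w z Z₂) : Covered par ℓ w z (Z₁ ∪ Z₂) := by
  refine ⟨h₁.1.union h₂.1, fun x hx hxz => ?_⟩
  wlog hx₁ : x ∈ Z₁ generalizing Z₁ Z₂
  · rw [union_comm] at hx ⊢
    exact this h₂ h₁ hx ((mem_union.mp hx).resolve_right hx₁)
  rw [← sub_nonneg, ← sum_sub_distrib, filter_union, ← union_sdiff_self_eq_union,
    sum_union disjoint_sdiff]
  refine add_nonneg ((covered_iff_sum_sub_nonneg.mp h₁).2 x hx₁ hxz) ?_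
  by_cases hx₂ : x ∈ Z₂
  · exact (h₂.filter_isDesc hx₂).sum_sdiff_nonneg (h₁.1.filter_isDesc hx₁)
  · have hempty : Z₂.filter (IsDesc par · x) = ∅ := filter_eq_empty_iff.mpr
      fun u hu hux => hx₂ (h₂.1.mem_of_isDesc hu hux (h₁.1.2.1 x hx₁))
    simp [hempty]

lemma supClosed_covered : SupClosed {Z | Covered par ℓ w z Z} :=
  fun _ h₁ _ h₂ => Covered.union h₁ h₂

lemma covered_of_forall_sum_sub_le (hZ : IsSubtree par z Z)
    (hmax : ∀ Y, IsSubtree par z Y → ∑ u ∈ Y, (w u - ℓ u) ≤ ∑ u ∈ Z, (w u - ℓ u)) :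
    Covered par ℓ w z Z := by
  refine covered_iff_sum_sub_nonneg.mpr ⟨hZ, fun x hx hxz => ?_⟩
  have hcut := hmax _ (hZ.filter_not_isDesc hx hxz)
  rw [← sum_filter_add_sum_filter_not Z (IsDesc par · x)] at hcut
  linarith

end Covered

section MaxCovered

variable {V : Type*} [Fintype V] [DecidableEq V] {par : V → V} {ℓ w : V → ℝ} {z : V}
  {Z : Finset V}

/-- The set `A_z` of the paper. -/
noncomputable def maxCovered (par : V → V) (ℓ w : V → ℝ) (z : V) : Finset V :=
  univ.filter (fun u => ∃ Z, Covered par ℓ w z Z ∧ u ∈ Z)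

lemma subset_maxCovered (hZ : Covered par ℓ w z Z) : Z ⊆ maxCovered par ℓ w z :=
  fun u hu => mem_filter.mpr ⟨mem_univ u, Z, hZ, hu⟩

variable [Std.Antisymm (IsDesc par)]

lemma covered_maxCovered : Covered par ℓ w z (maxCovered par ℓ w z) := by
  set S := univ.filter (Covered par ℓ w z)
  have hS : S.Nonempty := ⟨{z}, mem_filter.mpr ⟨mem_univ _, .singleton par ℓ w z⟩⟩
  have hsup : maxCovered par ℓ w z = S.sup' hS id := by
    ext u
    simp [maxCovered, S, mem_sup']
  rw [hsup]
  exact supClosed_covered.finsetSup'_mem hS fun Y hY => (mem_filter.mp hY).2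

lemma sum_sub_le_sum_sub_maxCovered (hZ : IsSubtree par z Z) :
    ∑ u ∈ Z, (w u - ℓ u) ≤ ∑ u ∈ maxCovered par ℓ w z, (w u - ℓ u) := by
  obtain ⟨M, hM, hmax⟩ := exists_max_image (univ.filter (IsSubtree par z))
    (fun Y => ∑ u ∈ Y, (w u - ℓ u)) ⟨{z}, by simp [IsSubtree.singleton]⟩
  have hMsub : IsSubtree par z M := (mem_filter.mp hM).2
  have hMcov : Covered par ℓ w z M :=
    covered_of_forall_sum_sub_le hMsub fun Y hY => hmax Y (by simp [hY])
  calc ∑ u ∈ Z, (w u - ℓ u) ≤ ∑ u ∈ M, (w u - ℓ u) := hmax Z (by simp [hZ])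
    _ ≤ ∑ u ∈ maxCovered par ℓ w z, (w u - ℓ u) := by
      rw [← sum_sdiff (subset_maxCovered hMcov)]
      exact le_add_of_nonneg_left (covered_maxCovered.sum_sdiff_nonneg hMsub)

end MaxCovered

theorem stmt17_general {V : Type*} [Fintype V] [DecidableEq V]
    (r : V) (par : V → V) (hroot : par r = r) (hreach : ∀ v, ∃ n : ℕ, par^[n] v = r)
    (ℓ w : V → ℝ) (z : V) :
    let A : Finset V := Finset.univ.filter (fun u => ∃ Z, Covered par ℓ w z Z ∧ u ∈ Z)
    (Covered par ℓ w z A ∧ ∀ Z, Covered par ℓ w z Z → Z ⊆ A) ∧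
    (∀ Z : Finset V, IsSubtree par z Z →
      ∑ u ∈ Z, w u - ∑ u ∈ Z \ {z}, ℓ u ≤ ∑ u ∈ A, w u - ∑ u ∈ A \ {z}, ℓ u) ∧
    (∀ Z : Finset V, IsSubtree par z Z → ∑ u ∈ Z, ℓ u ≤ ∑ u ∈ Z, w u →
      ∑ u ∈ A, ℓ u ≤ ∑ u ∈ A, w u) := by
  intro A
  have := antisymm_isDesc hroot hreach
  have hzA : z ∈ A := subset_maxCovered (.singleton par ℓ w z) (mem_singleton_self z)
  have hmax : ∀ Z, IsSubtree par z Z → ∑ u ∈ Z, (w u - ℓ u) ≤ ∑ u ∈ A, (w u - ℓ u) :=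
    fun Z hZ => sum_sub_le_sum_sub_maxCovered hZ
  refine ⟨⟨covered_maxCovered, fun Z => subset_maxCovered⟩, fun Z hZ => ?_, fun Z hZ hmature => ?_⟩
  · rw [sum_sub_sum_sdiff_singleton hZ.1, sum_sub_sum_sdiff_singleton hzA]
    linarith [hmax Z hZ]
  · have hA := hmax Z hZ
    rw [sum_sub_distrib, sum_sub_distrib] at hA
    linarith

/-- The correctness invariant of the offline algorithm CovSubT for Single-Phase MLAP:
letting `A_z` be the union of all covered subtrees rooted at `z`, (1) `A_z` is the
inclusion-maximal covered subtree rooted at `z`; (2) `A_z` maximizes the surplus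
`∑_{u∈Z} w u − ℓ(Z ∖ {z})` over all subtrees `Z` rooted at `z`; (3) hence if any
subtree rooted at `z` is mature, so is `A_z`. -/
theorem stmt17 {V : Type*} [Fintype V] [DecidableEq V]
    (r : V) (par : V → V) (hroot : par r = r) (hreach : ∀ v, ∃ n : ℕ, par^[n] v = r)
    (ℓ w : V → ℝ) (hℓ : ∀ u, 0 ≤ ℓ u) (hw : ∀ u, 0 ≤ w u) (z : V) :
    let A : Finset V := Finset.univ.filter (fun u => ∃ Z, Covered par ℓ w z Z ∧ u ∈ Z)
    (Covered par ℓ w z A ∧ ∀ Z, Covered par ℓ w z Z → Z ⊆ A) ∧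
    (∀ Z : Finset V, IsSubtree par z Z →
      ∑ u ∈ Z, w u - ∑ u ∈ Z \ {z}, ℓ u ≤ ∑ u ∈ A, w u - ∑ u ∈ A \ {z}, ℓ u) ∧
    (∀ Z : Finset V, IsSubtree par z Z → ∑ u ∈ Z, ℓ u ≤ ∑ u ∈ Z, w u →
      ∑ u ∈ A, ℓ u ≤ ∑ u ∈ A, w u) :=
  stmt17_general r par hroot hreach ℓ w z
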